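/- Let R⟨Q⟩ be the ordinary (non-complete) path algebra of the quiver Q of the canonical triangulation of the once-punctured torus, and let I be the two-sided ideal of R⟨Q⟩ generated by the cyclic derivatives ∂_a(S) for all arrows a, where S = a1b1c1 + a2b2c2 + x·a1b2c1a2b1c2 with x∈K nonzero. Then the quotient algebra R⟨Q⟩/I is infinite-dimensional over K (even though the Jacobian algebra R⟨⟨Q⟩⟩/J(S) is finite-dimensional). -/

import Mathlib

set_option synthInstance.maxHeartbeats 400000
set_option maxHeartbeats 1600000

namespace QPF

/-! ### Quivers and path data

A quiver is a finite directed multigraph.  A *path datum* is a pair `(i, l)` of a base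
vertex `i` and a list of arrows `l` (traversed left to right); it is *well-formed* (`WF`)
if consecutive arrows compose and the first arrow starts at `i`.  Well-formed path data
are exactly the paths of the quiver (the empty list encoding the trivial path at `i`). -/

structure Quiv (V : Type) : Type 1 where
  E : Type
  s : E → V
  t : E → V

variable {V : Type}

namespace Quiv

abbrev Pth (Q : Quiv V) : Type := V × List Q.E

variable {Q : Quiv V}

def WF (Q : Quiv V) (p : Q.Pth) : Prop :=
  List.Chain' (fun e f => Q.t e = Q.s f) p.2 ∧ ∀ e ∈ p.2.head?, Q.s e = p.1

def endV (Q : Quiv V) (p : Q.Pth) : V :=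
  p.2.getLast?.elim p.1 Q.t

/-- cyclic paths of positive length -/
def IsCycle (Q : Quiv V) (p : Q.Pth) : Prop := Q.WF p ∧ Q.endV p = p.1 ∧ p.2 ≠ []

/-- the list of vertices visited by a path datum -/
def visits (Q : Quiv V) (p : Q.Pth) : List V := p.1 :: p.2.map Q.t

theorem wf_nil (Q : Quiv V) (i : V) : Q.WF (i, ([] : List Q.E)) := ⟨List.isChain_nil, by simp⟩

theorem wf_arrow (Q : Quiv V) (e : Q.E) : Q.WF (Q.s e, [e]) :=
  ⟨List.isChain_singleton e, by simp⟩

@[simp] theorem endV_nil (i : V) : Q.endV (i, ([] : List Q.E)) = i := rfl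

@[simp] theorem endV_cons (i : V) (e : Q.E) (l : List Q.E) :
    Q.endV (i, e :: l) = Q.endV (Q.t e, l) := by
  cases l with
  | nil => rfl
  | cons f l =>
      cases h : (f :: l).getLast? with
      | none => simp at h
      | some x => simp [Quiv.endV, List.getLast?_cons_cons, h]

theorem endV_append (i : V) (a b : List Q.E) :
    Q.endV (i, a ++ b) = Q.endV (Q.endV (i, a), b) := by
  cases h : b.getLast? <;> simp [Quiv.endV, List.getLast?_append, h]

theorem WF.append {i : V} {a b : List Q.E}
    (ha : Q.WF (i, a)) (hb : Q.WF (Q.endV (i, a), b)) : Q.WF (i, a ++ b) := by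
  constructor
  · show List.IsChain _ (a ++ b)
    rw [List.isChain_append]
    refine ⟨ha.1, hb.1, ?_⟩
    intro x hx y hy
    have h1 := hb.2 y hy
    rw [show Q.endV (i, a) = Q.t x by simp [Quiv.endV, Option.mem_def.mp hx]] at h1
    exact h1.symm
  · intro e he
    cases a with
    | nil => exact hb.2 e (by simpa using he)
    | cons f a' =>
        have hef : f = e := by simpa using he
        subst hef
        exact ha.2 f (by simp)

end Quiv

/-! ### The complete path algebra

`Series K Q` is the space of all (possibly infinite) `K`-linear combinations of path data
of `Q`, i.e. arbitrary functions `Q.Pth → K`, with the convolution product.  The complete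
path algebra `R⟨⟨Q⟩⟩` is the subalgebra `pathAlg K Q` of series supported on well-formed
path data. -/

def Series (K : Type) {V : Type} (Q : Quiv V) : Type := Q.Pth → K

namespace Series

variable {K : Type} [Field K] {Q : Quiv V}

instance : AddCommGroup (Series K Q) := inferInstanceAs (AddCommGroup (Q.Pth → K))
instance : Module K (Series K Q) := inferInstanceAs (Module K (Q.Pth → K))

@[simp] theorem add_apply (u v : Series K Q) (p : Q.Pth) : (u + v) p = u p + v p := rfl
@[simp] theorem sub_apply (u v : Series K Q) (p : Q.Pth) : (u - v) p = u p - v p := rfl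
@[simp] theorem neg_apply (u : Series K Q) (p : Q.Pth) : (-u) p = -(u p) := rfl
@[simp] theorem smul_apply (c : K) (u : Series K Q) (p : Q.Pth) : (c • u) p = c * u p := rfl
@[simp] theorem zero_apply (p : Q.Pth) : (0 : Series K Q) p = 0 := rfl

/-- all decompositions of a list into a prefix and a suffix -/
def splits {α : Type} (l : List α) : List (List α × List α) := l.inits.zip l.tails

theorem splits_nil {α : Type} : splits ([] : List α) = [([], [])] := rfl

theorem splits_cons {α : Type} (e : α) (l : List α) :
    splits (e :: l) = ([], e :: l) :: (splits l).map (fun q => (e :: q.1, q.2)) := by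
  unfold splits
  rw [List.inits_cons, List.tails_cons, List.zip_cons_cons, List.zip_map_left]
  rfl

theorem mem_splits {α : Type} {l : List α} {q : List α × List α} (h : q ∈ splits l) :
    q.1 ++ q.2 = l := by
  induction l generalizing q with
  | nil => simp only [splits_nil, List.mem_singleton] at h; subst h; rfl
  | cons e l ih =>
      rw [splits_cons, List.mem_cons] at h
      rcases h with h | h
      · subst h; rfl
      · obtain ⟨r, hr, rfl⟩ := List.mem_map.mp h
        simpa using congrArg (e :: ·) (ih hr)

section SumLemmas

variable {α : Type}

theorem lsum_add (l : List α) (f g : α → K) :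
    (l.map fun x => f x + g x).sum = (l.map f).sum + (l.map g).sum := by
  induction l with
  | nil => simp
  | cons a l ih => simp [ih]; ring

theorem lsum_mul_right (l : List α) (f : α → K) (c : K) :
    (l.map fun x => f x * c).sum = (l.map f).sum * c := by
  induction l with
  | nil => simp
  | cons a l ih => simp [ih]; ring

theorem lsum_mul_left (l : List α) (f : α → K) (c : K) :
    (l.map fun x => c * f x).sum = c * (l.map f).sum := by
  induction l with
  | nil => simp
  | cons a l ih => simp [ih]; ring

end SumLemmas

/-- the convolution product on series -/
protected def mul (u v : Series K Q) : Series K Q := fun p =>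
  ((splits p.2).map fun q => u (p.1, q.1) * v (Q.endV (p.1, q.1), q.2)).sum

/-- the identity: the sum of all trivial paths -/
protected def one : Series K Q := fun p => match p.2 with | [] => 1 | _ => 0

theorem one_def_nil (i : V) : (Series.one : Series K Q) (i, []) = 1 := rfl
theorem one_def_cons (i : V) (e : Q.E) (l : List Q.E) :
    (Series.one : Series K Q) (i, e :: l) = 0 := rfl

/-- key rearrangement: summing over two-step splittings in either order agrees -/
theorem splits_splits_sum {α : Type} (l : List α) (F : List α → List α → List α → K) :
    ((splits l).map fun q => ((splits q.1).map fun r => F r.1 r.2 q.2).sum).sum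
      = ((splits l).map fun q => ((splits q.2).map fun r => F q.1 r.1 r.2).sum).sum := by
  induction l generalizing F with
  | nil => simp [splits_nil]
  | cons e l ih =>
      conv_lhs => rw [splits_cons]
      conv_rhs => rw [splits_cons]
      simp only [List.map_cons, List.sum_cons, List.map_map, Function.comp_def]
      have hL : ∀ q ∈ splits l,
          ((splits (e :: q.1)).map fun r => F r.1 r.2 q.2).sum
            = F [] (e :: q.1) q.2 + ((splits q.1).map fun r => F (e :: r.1) r.2 q.2).sum := by
        intro q _
        rw [splits_cons]
        simp [List.map_map, Function.comp_def]
      rw [List.map_congr_left hL, lsum_add]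
      rw [splits_cons]
      simp only [List.map_cons, List.sum_cons, List.map_map, Function.comp_def]
      rw [ih (fun a b c => F (e :: a) b c)]
      simp [splits_nil]
      ring

theorem mul_assoc' (u v w : Series K Q) :
    Series.mul (Series.mul u v) w = Series.mul u (Series.mul v w) := by
  funext p
  obtain ⟨i, l⟩ := p
  show ((splits l).map fun q =>
          (Series.mul u v) (i, q.1) * w (Q.endV (i, q.1), q.2)).sum
      = ((splits l).map fun q =>
          u (i, q.1) * (Series.mul v w) (Q.endV (i, q.1), q.2)).sum
  have hL : ∀ q ∈ splits l,
      (Series.mul u v) (i, q.1) * w (Q.endV (i, q.1), q.2)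
        = ((splits q.1).map fun r =>
            u (i, r.1) * v (Q.endV (i, r.1), r.2) * w (Q.endV (i, r.1 ++ r.2), q.2)).sum := by
    intro q hq
    show (((splits q.1)).map fun r => u (i, r.1) * v (Q.endV (i, r.1), r.2)).sum
          * w (Q.endV (i, q.1), q.2) = _
    rw [← lsum_mul_right]
    refine congrArg List.sum (List.map_congr_left ?_)
    intro r hr
    rw [show (r.1 ++ r.2 : List Q.E) = q.1 from mem_splits hr]
  have hR : ∀ q ∈ splits l,
      u (i, q.1) * (Series.mul v w) (Q.endV (i, q.1), q.2)
        = ((splits q.2).map fun r =>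
            u (i, q.1) * v (Q.endV (i, q.1), r.1) * w (Q.endV (i, q.1 ++ r.1), r.2)).sum := by
    intro q hq
    show u (i, q.1) * (((splits q.2)).map fun r =>
            v (Q.endV (i, q.1), r.1) * w (Q.endV (Q.endV (i, q.1), r.1), r.2)).sum = _
    rw [← lsum_mul_left]
    refine congrArg List.sum (List.map_congr_left ?_)
    intro r hr
    rw [Quiv.endV_append, mul_assoc]
  rw [List.map_congr_left hL, List.map_congr_left hR]
  exact splits_splits_sum l
    (fun a b c => u (i, a) * v (Q.endV (i, a), b) * w (Q.endV (i, a ++ b), c))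

theorem one_mul' (u : Series K Q) : Series.mul Series.one u = u := by
  funext p
  obtain ⟨i, l⟩ := p
  cases l with
  | nil => show Series.one (i, []) * u (Q.endV (i, ([] : List Q.E)), []) + 0 = u (i, [])
           simp [Series.one]
  | cons e l =>
      show ((splits (e :: l)).map fun q =>
        Series.one (i, q.1) * u (Q.endV (i, q.1), q.2)).sum = u (i, e :: l)
      rw [splits_cons]
      simp only [List.map_cons, List.sum_cons, List.map_map, Function.comp_def]
      have : ∀ q ∈ splits l,
          Series.one (i, e :: q.1) * u (Q.endV (i, e :: q.1), q.2) = 0 := by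
        intro q _
        show (0 : K) * _ = 0
        exact zero_mul _
      rw [List.map_congr_left this]
      simp [Series.one]

theorem mul_one' (u : Series K Q) : Series.mul u Series.one = u := by
  suffices h : ∀ (l : List Q.E) (i : V) (u : Series K Q),
      Series.mul u Series.one (i, l) = u (i, l) by
    funext p; exact h p.2 p.1 u
  intro l
  induction l with
  | nil =>
      intro i u
      show u (i, []) * Series.one (Q.endV (i, ([] : List Q.E)), []) + 0 = u (i, [])
      simp [Series.one]
  | cons e l ih =>
      intro i u
      show ((splits (e :: l)).map fun q =>
        u (i, q.1) * Series.one (Q.endV (i, q.1), q.2)).sum = u (i, e :: l)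
      rw [splits_cons]
      simp only [List.map_cons, List.sum_cons, List.map_map, Function.comp_def]
      have h0 : u (i, ([] : List Q.E)) * Series.one (Q.endV (i, ([] : List Q.E)), e :: l) = 0 := by
        show _ * (0 : K) = 0; exact mul_zero _
      have hrest : ∀ q ∈ splits l,
          u (i, e :: q.1) * Series.one (Q.endV (i, e :: q.1), q.2)
            = (fun pr : Q.Pth => u (i, e :: pr.2)) (Q.t e, q.1)
              * Series.one (Q.endV (Q.t e, q.1), q.2) := by
        intro q _
        rw [Quiv.endV_cons]
      rw [h0, List.map_congr_left hrest, zero_add]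
      have := ih (Q.t e) (fun pr : Q.Pth => u (i, e :: pr.2))
      exact this

theorem left_distrib' (u v w : Series K Q) :
    Series.mul u (v + w) = Series.mul u v + Series.mul u w := by
  funext p
  show ((splits p.2).map fun q =>
      u (p.1, q.1) * (v (Q.endV (p.1, q.1), q.2) + w (Q.endV (p.1, q.1), q.2))).sum = _ + _
  rw [show (fun q : List Q.E × List Q.E =>
      u (p.1, q.1) * (v (Q.endV (p.1, q.1), q.2) + w (Q.endV (p.1, q.1), q.2)))
      = fun q => u (p.1, q.1) * v (Q.endV (p.1, q.1), q.2)
          + u (p.1, q.1) * w (Q.endV (p.1, q.1), q.2) from funext fun q => by ring]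
  rw [lsum_add]
  rfl

theorem right_distrib' (u v w : Series K Q) :
    Series.mul (u + v) w = Series.mul u w + Series.mul v w := by
  funext p
  show ((splits p.2).map fun q =>
      (u (p.1, q.1) + v (p.1, q.1)) * w (Q.endV (p.1, q.1), q.2)).sum = _ + _
  rw [show (fun q : List Q.E × List Q.E =>
      (u (p.1, q.1) + v (p.1, q.1)) * w (Q.endV (p.1, q.1), q.2))
      = fun q => u (p.1, q.1) * w (Q.endV (p.1, q.1), q.2)
          + v (p.1, q.1) * w (Q.endV (p.1, q.1), q.2) from funext fun q => by ring]
  rw [lsum_add]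
  rfl

theorem zero_mul' (u : Series K Q) : Series.mul 0 u = 0 := by
  funext p
  show ((splits p.2).map fun q => (0 : K) * u (Q.endV (p.1, q.1), q.2)).sum = 0
  refine List.sum_eq_zero ?_
  intro x hx
  obtain ⟨q, _, rfl⟩ := List.mem_map.mp hx
  exact zero_mul _

theorem mul_zero' (u : Series K Q) : Series.mul u 0 = 0 := by
  funext p
  show ((splits p.2).map fun q => u (p.1, q.1) * (0 : K)).sum = 0
  refine List.sum_eq_zero ?_
  intro x hx
  obtain ⟨q, _, rfl⟩ := List.mem_map.mp hx
  exact mul_zero _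

instance instRing : Ring (Series K Q) :=
  { (inferInstance : AddCommGroup (Series K Q)) with
    mul := Series.mul
    one := Series.one
    mul_assoc := mul_assoc'
    one_mul := one_mul'
    mul_one := mul_one'
    left_distrib := left_distrib'
    right_distrib := right_distrib'
    zero_mul := zero_mul'
    mul_zero := mul_zero' }

@[simp] theorem mul_apply (u v : Series K Q) (p : Q.Pth) :
    (u * v) p = ((splits p.2).map fun q =>
      u (p.1, q.1) * v (Q.endV (p.1, q.1), q.2)).sum := rfl

@[simp] theorem one_apply_nil (i : V) : (1 : Series K Q) (i, []) = 1 := rfl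
@[simp] theorem one_apply_cons (i : V) (e : Q.E) (l : List Q.E) :
    (1 : Series K Q) (i, e :: l) = 0 := rfl

instance instAlgebra : Algebra K (Series K Q) := by
  refine Algebra.ofModule ?_ ?_
  · intro c u v
    funext p
    show ((splits p.2).map fun q => (c * u (p.1, q.1)) * v (Q.endV (p.1, q.1), q.2)).sum
        = c * ((splits p.2).map fun q => u (p.1, q.1) * v (Q.endV (p.1, q.1), q.2)).sum
    rw [← lsum_mul_left]
    exact congrArg List.sum (List.map_congr_left fun q _ => by ring)
  · intro c u v
    funext p
    show ((splits p.2).map fun q => u (p.1, q.1) * (c * v (Q.endV (p.1, q.1), q.2))).sum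
        = c * ((splits p.2).map fun q => u (p.1, q.1) * v (Q.endV (p.1, q.1), q.2)).sum
    rw [← lsum_mul_left]
    exact congrArg List.sum (List.map_congr_left fun q _ => by ring)

end Series

section PathAlg

variable {K : Type} [Field K] {Q : Quiv V}

open Series

/-- The complete path algebra `R⟨⟨Q⟩⟩`: series supported on well-formed path data. -/
def pathAlg (K : Type) [Field K] (Q : Quiv V) : Subalgebra K (Series K Q) :=
  { carrier := {u | ∀ p : Q.Pth, ¬ Q.WF p → u p = 0}
    add_mem' := fun {u v} hu hv p hp => by
      simp only [Set.mem_setOf_eq] at hu hv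
      show u p + v p = 0
      rw [hu p hp, hv p hp, add_zero]
    zero_mem' := fun p _ => rfl
    one_mem' := fun p hp => by
      obtain ⟨i, l⟩ := p
      cases l with
      | nil => exact absurd (Quiv.wf_nil Q i) hp
      | cons e l => rfl
    mul_mem' := fun {u v} hu hv p hp => by
      simp only [Set.mem_setOf_eq] at hu hv
      show ((splits p.2).map fun q =>
        u (p.1, q.1) * v (Q.endV (p.1, q.1), q.2)).sum = 0
      refine List.sum_eq_zero ?_
      intro x hx
      obtain ⟨q, hq, rfl⟩ := List.mem_map.mp hx
      by_cases h1 : Q.WF (p.1, q.1)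
      · by_cases h2 : Q.WF (Q.endV (p.1, q.1), q.2)
        · exact absurd (by
            have := Quiv.WF.append h1 h2
            rwa [mem_splits hq] at this) hp
        · rw [hv _ h2, mul_zero]
      · rw [hu _ h1, zero_mul]
    algebraMap_mem' := fun c p hp => by
      rw [Algebra.algebraMap_eq_smul_one]
      show c * (1 : Series K Q) p = 0
      obtain ⟨i, l⟩ := p
      cases l with
      | nil => exact absurd (Quiv.wf_nil Q i) hp
      | cons e l => show c * 0 = 0; rw [mul_zero] }

theorem mem_pathAlg_iff {u : Series K Q} :
    u ∈ pathAlg K Q ↔ ∀ p : Q.Pth, ¬ Q.WF p → u p = 0 := Iff.rfl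

open Classical in
/-- the characteristic series of a single path datum -/
noncomputable def unitS (p : Q.Pth) : Series K Q := fun q => if q = p then 1 else 0

theorem unitS_mem {p : Q.Pth} (hp : Q.WF p) : (unitS p : Series K Q) ∈ pathAlg K Q := by
  intro q hq
  unfold unitS
  split
  · next h => subst h; exact absurd hp hq
  · rfl

/-- the idempotent of a vertex, i.e. the trivial path at `i` -/
noncomputable def vtxS (i : V) : Series K Q := unitS (i, [])

theorem vtxS_mem (i : V) : (vtxS i : Series K Q) ∈ pathAlg K Q :=
  unitS_mem (Quiv.wf_nil Q i)

/-- the trivial path at `i` as an element of the complete path algebra -/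
noncomputable def vtxPA (K : Type) [Field K] (Q : Quiv V) (i : V) : pathAlg K Q :=
  ⟨vtxS i, vtxS_mem i⟩

/-- the path `p` as an element of the complete path algebra -/
noncomputable def unitPA {p : Q.Pth} (hp : Q.WF p) : pathAlg K Q :=
  ⟨unitS p, unitS_mem hp⟩

/-- the arrow `e` as an element of the complete path algebra -/
noncomputable def arrowPA (K : Type) [Field K] (Q : Quiv V) (e : Q.E) : pathAlg K Q :=
  unitPA (Quiv.wf_arrow Q e)

/-- A potential: a series all of whose terms are cyclic paths of positive length. -/
def IsPotential (S : Series K Q) : Prop := ∀ p : Q.Pth, S p ≠ 0 → Q.IsCycle p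

/-- `q` is obtained from the cyclic path `p` by a rotation -/
def RotOf (Q : Quiv V) (p q : Q.Pth) : Prop :=
  ∃ a b : List Q.E, p.2 = a ++ b ∧ q = (Q.endV (p.1, a), b ++ a)

/-- A quiver with potential `(Q, S)`: `S` is a potential no two of whose terms
are cyclically equivalent paths. -/
def IsQP (S : Series K Q) : Prop :=
  IsPotential S ∧ ∀ p q : Q.Pth, S p ≠ 0 → S q ≠ 0 → p ≠ q → ¬ RotOf Q p q

/-- Closure in the `m`-adic topology (`m` = ideal generated by the arrows):
`u` lies in `madicClosure T` iff for every `n` it agrees with some element of `T`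
on all paths of length `< n`. -/
def madicClosure (T : Set (Series K Q)) : Set (Series K Q) :=
  {u | ∀ n : ℕ, ∃ v ∈ T, ∀ p : Q.Pth, p.2.length < n → u p = v p}

/-- the set of differences `c - c'` where `c'` is a rotation of the cyclic path `c` -/
def rotDiffSet (K : Type) [Field K] (Q : Quiv V) : Set (Series K Q) :=
  {u | ∃ (i : V) (a b : List Q.E), Q.IsCycle (i, a ++ b) ∧
    u = unitS (i, a ++ b) - unitS (Q.endV (i, a), b ++ a)}

/-- Cyclic equivalence of potentials: the difference lies in the closure of the span of
all differences `a₁⋯a_d - a₂⋯a_d a₁`. -/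
def CyclicEquiv (S S' : Series K Q) : Prop :=
  S - S' ∈ madicClosure ↑(Submodule.span K (rotDiffSet K Q))

/-- A right-equivalence between the QPs `(Q, S)` and `(Q', S')` on the same vertex set:
an algebra isomorphism of the complete path algebras fixing the vertex idempotents and
sending `S` to a potential cyclically equivalent to `S'`. -/
structure QPEquiv (Q Q' : Quiv V) (S : pathAlg K Q) (S' : pathAlg K Q') where
  φ : pathAlg K Q ≃ₐ[K] pathAlg K Q'
  fix : ∀ i : V, φ (vtxPA K Q i) = vtxPA K Q' i
  cyc : CyclicEquiv ((φ S : pathAlg K Q') : Series K Q') (S' : Series K Q')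

end PathAlg

/-! ### Cyclic derivatives and Jacobian ideals -/

section Jacobian

variable {K : Type} [Field K] {Q : Quiv V}

open Series

open Classical in
/-- The cyclic derivative `∂ₑ(S)` of a potential `S` with respect to the arrow `e`:
for a cyclic path `c = q ++ [e] ++ r` it contributes the rotated path `r ++ q` (running
from `Q.t e` to `Q.s e`).  (For a potential `S` the result is automatically supported on
well-formed paths, which is built into the formula.) -/
noncomputable def cycDeriv (S : Series K Q) (e : Q.E) : Series K Q := fun p =>
  if Q.WF p ∧ p.1 = Q.t e then
    ((splits p.2).map fun q => S (Q.endV (p.1, q.1), q.2 ++ e :: q.1)).sum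
  else 0

theorem cycDeriv_mem (S : Series K Q) (e : Q.E) : cycDeriv S e ∈ pathAlg K Q := by
  intro p hp
  unfold cycDeriv
  rw [if_neg (fun h => hp h.1)]

/-- the cyclic derivative as an element of the complete path algebra -/
noncomputable def cycDerivPA (S : pathAlg K Q) (e : Q.E) : pathAlg K Q :=
  ⟨cycDeriv (S : Series K Q) e, cycDeriv_mem _ e⟩

/-- the set of finite sums `∑ aᵢ * gᵢ * bᵢ` with `gᵢ ∈ T`: the two-sided ideal
generated by `T` in a (unital) ring -/
def twoSidedSpan {R : Type} [Ring R] (T : Set R) : Set R :=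
  {x | ∃ l : List (R × R × R), (∀ q ∈ l, q.2.1 ∈ T) ∧
    (l.map fun q => q.1 * q.2.1 * q.2.2).sum = x}

/-- closure in the `m`-adic topology, for subsets of the complete path algebra -/
def madicClosurePA (T : Set (pathAlg K Q)) : Set (pathAlg K Q) :=
  {u | ∀ n : ℕ, ∃ v ∈ T, ∀ p : Q.Pth, p.2.length < n →
    (u : Series K Q) p = (v : Series K Q) p}

/-- The Jacobian ideal `J(S)` (as a subset of the complete path algebra): the `m`-adic
closure of the two-sided ideal generated by the cyclic derivatives of `S`. -/
def jacobSet (S : pathAlg K Q) : Set (pathAlg K Q) :=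
  madicClosurePA (twoSidedSpan (Set.range (cycDerivPA S)))

end Jacobian

/-! ### Restriction -/

section Restriction

variable {K : Type} [Field K]

/-- The restriction `Q|_I` of the quiver `Q` to a subset `I` of its vertex set: the
vertex set is unchanged, and only the arrows with head and tail in `I` are kept. -/
def Quiv.restrict (Q : Quiv V) (I : Set V) : Quiv V where
  E := {e : Q.E // Q.s e ∈ I ∧ Q.t e ∈ I}
  s e := Q.s e.1
  t e := Q.t e.1

variable {Q : Quiv V} {I : Set V}

theorem pmap_subtype_val {alpha : Type} {P : alpha → Prop} (l : List alpha) (h : ∀ a ∈ l, P a) :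
    (l.pmap (fun a (ha : P a) => (⟨a, ha⟩ : Subtype P)) h).map Subtype.val = l := by
  induction l with
  | nil => rfl
  | cons a l ih => simp [ih]

theorem Quiv.wf_restrict {i : V} {l : List (Q.restrict I).E} :
    (Q.restrict I).WF (i, l) ↔ Q.WF (i, l.map Subtype.val) := by
  unfold Quiv.WF
  constructor
  · rintro ⟨h1, h2⟩
    refine ⟨(List.isChain_map _).mpr h1, ?_⟩
    intro e he
    erw [List.head?_map] at he
    obtain ⟨f, hf, rfl⟩ := Option.map_eq_some_iff.mp (Option.mem_def.mp he)
    exact h2 f hf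
  · rintro ⟨h1, h2⟩
    refine ⟨(List.isChain_map _).mp h1, ?_⟩
    intro e he
    refine h2 e.1 ?_
    erw [List.head?_map]
    exact Option.mem_def.mpr (Option.map_eq_some_iff.mpr ⟨e, Option.mem_def.mp he, rfl⟩)

/-- restriction `ρ_I` of a series: evaluate on the underlying path of `Q` -/
def resSeries (I : Set V) (u : Series K Q) : Series K (Q.restrict I) :=
  fun p => u (p.1, p.2.map Subtype.val)

theorem resSeries_mem {u : Series K Q} (hu : u ∈ pathAlg K Q) :
    resSeries I u ∈ pathAlg K (Q.restrict I) := by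
  intro p hp
  exact hu _ (fun h => hp (Quiv.wf_restrict.mpr h))

/-- restriction `ρ_I : R⟨⟨Q⟩⟩ → R⟨⟨Q|_I⟩⟩` on the complete path algebra -/
def resPA (I : Set V) (u : pathAlg K Q) : pathAlg K (Q.restrict I) :=
  ⟨resSeries I (u : Series K Q), resSeries_mem u.2⟩

open Classical in
/-- inclusion of `R⟨⟨Q|_I⟩⟩` into `R⟨⟨Q⟩⟩` (a series on the restricted quiver, viewed as
a series on `Q` supported on paths all of whose arrows have endpoints in `I`) -/
noncomputable def inclSeries (I : Set V) (u : Series K (Q.restrict I)) : Series K Q :=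
  fun p =>
    if h : ∀ e ∈ p.2, Q.s e ∈ I ∧ Q.t e ∈ I then
      u (p.1, p.2.pmap (fun e he => (⟨e, he⟩ : (Q.restrict I).E)) h)
    else 0

theorem inclSeries_mem {u : Series K (Q.restrict I)}
    (hu : u ∈ pathAlg K (Q.restrict I)) : inclSeries I u ∈ pathAlg K Q := by
  intro p hp
  unfold inclSeries
  split
  · next h =>
      refine hu _ ?_
      rw [Quiv.wf_restrict]
      have hmap : (p.2.pmap (fun e he => (⟨e, he⟩ : (Q.restrict I).E)) h).map Subtype.val
          = p.2 := pmap_subtype_val p.2 h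
      erw [hmap]
      exact fun hw => hp (by exact hw)
  · rfl

/-- inclusion on the complete path algebras -/
noncomputable def inclPA (I : Set V) (u : pathAlg K (Q.restrict I)) : pathAlg K Q :=
  ⟨inclSeries I (u : Series K (Q.restrict I)), inclSeries_mem u.2⟩

end Restriction

/-! ### Decorated representations

Every decorated representation of a QP `(Q, S)` (i.e. a finite-dimensional left module
over the Jacobian algebra `P(Q, S)` together with a finite-dimensional module over the
vertex span `R`) is prescribed by: finite-dimensional spaces `M i`, linear maps attached
to the arrows, nilpotency, and annihilation by the cyclic derivatives of `S`; together
with the decoration spaces `D i`.  We encode the arrow maps as endomorphisms of the total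
space `∀ i, M i` supported on the relevant coordinates. -/

section Reps

variable {K : Type} [Field K] [DecidableEq V]

/-- projection onto the `i`-th coordinate, as an endomorphism of `∀ j, M j` -/
def vproj {K : Type} [Field K] (M : V → Type) [∀ i, AddCommGroup (M i)]
    [∀ i, Module K (M i)] [DecidableEq V] (i : V) : (∀ j, M j) →ₗ[K] (∀ j, M j) :=
  (LinearMap.single K M i).comp (LinearMap.proj i)

/-- A representation-with-decoration datum for the quiver `Q`. -/
structure PreRep (K : Type) [Field K] {V : Type} [DecidableEq V] (Q : Quiv V) :
    Type 1 where
  M : V → Type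
  [acg : ∀ i, AddCommGroup (M i)]
  [mod : ∀ i, Module K (M i)]
  fd : ∀ i, FiniteDimensional K (M i)
  act : Q.E → ((∀ i, M i) →ₗ[K] (∀ i, M i))
  supp : ∀ e : Q.E,
    (vproj M (Q.t e)).comp ((act e).comp (vproj M (Q.s e))) = act e
  D : V → Type
  [acgD : ∀ i, AddCommGroup (D i)]
  [modD : ∀ i, Module K (D i)]
  fdD : ∀ i, FiniteDimensional K (D i)

attribute [instance] PreRep.acg PreRep.mod PreRep.acgD PreRep.modD

namespace PreRep

variable {Q : Quiv V} (N : PreRep K Q)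

/-- action of a list of arrows (applied left to right) -/
def listAct (l : List Q.E) : (∀ i, N.M i) →ₗ[K] (∀ i, N.M i) :=
  l.foldl (fun T e => (N.act e).comp T) LinearMap.id

/-- action of a path datum (project to the base vertex, then traverse the arrows) -/
def pAct (p : Q.Pth) : (∀ i, N.M i) →ₗ[K] (∀ i, N.M i) :=
  (N.listAct p.2).comp (vproj N.M p.1)

/-- the arrow `e`, as a map `M (s e) → M (t e)` -/
def actHom (e : Q.E) : N.M (Q.s e) →ₗ[K] N.M (Q.t e) :=
  (LinearMap.proj (Q.t e)).comp ((N.act e).comp (LinearMap.single K N.M (Q.s e)))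

/-- nilpotency: all sufficiently long paths act as zero -/
def Nilpotent : Prop := ∃ r : ℕ, ∀ l : List Q.E, r ≤ l.length → N.listAct l = 0

/-- `ActsAs N u T`: the (essentially finite) sum `∑_p u p • pAct p` is defined
and equal to `T`; i.e. the series `u` acts on `N` as the operator `T` -/
def ActsAs (u : Series K Q) (T : (∀ i, N.M i) →ₗ[K] (∀ i, N.M i)) : Prop :=
  ∃ fs : Finset Q.Pth, (∀ p ∉ fs, u p • N.pAct p = 0) ∧
    (∑ p ∈ fs, u p • N.pAct p) = T

/-- the series `u` annihilates `N` -/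
def AnnihilatedBy (u : Series K Q) : Prop := N.ActsAs u 0

/-- `N` satisfies (is annihilated by) the cyclic derivatives of the potential `S` -/
def SatisfiesCycDerivs (S : Series K Q) : Prop :=
  ∀ e : Q.E, N.AnnihilatedBy (cycDeriv S e)

/-- `N` is (the datum of) a decorated representation of the QP `(Q, S)`: a nilpotent
representation annihilated by the cyclic derivatives of `S` (equivalently, by the
Jacobian ideal `J(S)`), together with the decoration. -/
def IsDec (S : Series K Q) : Prop := N.Nilpotent ∧ N.SatisfiesCycDerivs S

/-- `I`-path-restrictability: every (well-formed) path with endpoints in `I` passing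
through a vertex outside `I` acts as zero. -/
def PathRestrictable (I : Set V) : Prop :=
  ∀ p : Q.Pth, Q.WF p → p.1 ∈ I → Q.endV p ∈ I →
    (∃ k ∈ Q.visits p, k ∉ I) → N.pAct p = 0

end PreRep

/-- A right-equivalence between decorated representations `N` of `(Q, S)` and `N'` of
`(Q', S')`: a right-equivalence `φ` of the QPs, a compatible vector-space isomorphism
`ψ` of the underlying modules (i.e. `ψ ∘ u_M = φ(u)_{M'} ∘ ψ` for all `u ∈ R⟨⟨Q⟩⟩`),
and an `R`-module isomorphism `η` of the decorations. -/
structure RepEquiv (Q Q' : Quiv V) (S : pathAlg K Q) (S' : pathAlg K Q')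
    (N : PreRep K Q) (N' : PreRep K Q') : Type 1 where
  qp : QPEquiv Q Q' S S'
  ψ : (∀ i, N.M i) ≃ₗ[K] (∀ i, N'.M i)
  compat : ∀ (u : pathAlg K Q) (T T'),
    N.ActsAs (u : Series K Q) T → N'.ActsAs ((qp.φ u : pathAlg K Q') : Series K Q') T' →
    ∀ x, ψ (T x) = T' (ψ x)
  η : ∀ i, N.D i ≃ₗ[K] N'.D i

/-- decorated representations are right-equivalent -/
def RepRightEquivalent (Q Q' : Quiv V) (S : pathAlg K Q) (S' : pathAlg K Q')
    (N : PreRep K Q) (N' : PreRep K Q') : Prop :=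
  Nonempty (RepEquiv Q Q' S S' N N')

section Sandwich

variable {M : V → Type} [∀ i, AddCommGroup (M i)] [∀ i, Module K (M i)]

theorem sandwich_supp (a b : V) (f : M a →ₗ[K] M b) :
    (vproj M b).comp
        (((LinearMap.single K M b).comp (f.comp (LinearMap.proj a))).comp (vproj M a))
      = (LinearMap.single K M b).comp (f.comp (LinearMap.proj a)) := by
  ext x : 1
  simp [vproj]

end Sandwich

open Classical in
/-- the submodule family realizing the restriction to `I`: everything over `I`,
zero outside -/
noncomputable def resMod {Q : Quiv V} (N : PreRep K Q) (I : Set V) (i : V) :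
    Submodule K (N.M i) :=
  if i ∈ I then ⊤ else ⊥

/-- Restriction of a representation to a vertex subset `I`: the spaces over vertices of
`I` are kept, the others are replaced by `0`; arrows of `Q|_I` act as before; the
decoration is unchanged. -/
noncomputable def PreRep.restrict {Q : Quiv V} (N : PreRep K Q) (I : Set V) :
    PreRep K (Q.restrict I) where
  M i := ↥(resMod N I i)
  fd i := letI := N.fd i; inferInstance
  act e :=
    (LinearMap.single K (fun i => ↥(resMod N I i)) (Q.t e.1)).comp
      ((LinearMap.codRestrict (resMod N I (Q.t e.1))
          ((N.actHom e.1).comp (Submodule.subtype (resMod N I (Q.s e.1))))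
          (fun x => by
            unfold resMod
            rw [if_pos e.2.2]
            exact Submodule.mem_top)).comp
        (LinearMap.proj (Q.s e.1)))
  supp e := sandwich_supp (Q.s e.1) (Q.t e.1) _
  D := N.D
  fdD := N.fdD

end Reps

/-! ### Direct sums, trivial and reduced QPs, reduced parts -/

section Splitting

variable {K : Type} [Field K]

/-- direct sum of two quivers on the same vertex set -/
def Quiv.sum (Qa Qc : Quiv V) : Quiv V where
  E := Qa.E ⊕ Qc.E
  s := Sum.elim Qa.s Qc.s
  t := Sum.elim Qa.t Qc.t

open Classical in
/-- a series on `Qa`, viewed as a series on `Qa ⊕ Qc` (gated by well-formedness;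
for series supported on well-formed paths this is the canonical embedding) -/
noncomputable def sumInl (Qa Qc : Quiv V) (u : Series K Qa) :
    Series K (Qa.sum Qc) := fun p =>
  if (Qa.sum Qc).WF p then
    (if h : ∀ e ∈ p.2, e.isLeft = true then
      u (p.1, p.2.pmap (fun e he => Sum.getLeft e he) h)
    else 0)
  else 0

open Classical in
/-- a series on `Qc`, viewed as a series on `Qa ⊕ Qc` -/
noncomputable def sumInr (Qa Qc : Quiv V) (u : Series K Qc) :
    Series K (Qa.sum Qc) := fun p =>
  if (Qa.sum Qc).WF p then
    (if h : ∀ e ∈ p.2, e.isRight = true then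
      u (p.1, p.2.pmap (fun e he => Sum.getRight e he) h)
    else 0)
  else 0

theorem sumInl_mem (Qa Qc : Quiv V) (u : Series K Qa) :
    sumInl Qa Qc u ∈ pathAlg K (Qa.sum Qc) := by
  intro p hp; unfold sumInl; rw [if_neg hp]

theorem sumInr_mem (Qa Qc : Quiv V) (u : Series K Qc) :
    sumInr Qa Qc u ∈ pathAlg K (Qa.sum Qc) := by
  intro p hp; unfold sumInr; rw [if_neg hp]

/-- direct sum `S ⊕ T` of two potentials, as an element of the complete path algebra of
the direct sum quiver -/
noncomputable def sumPA {Qa Qc : Quiv V} (Sa : pathAlg K Qa) (Tc : pathAlg K Qc) :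
    pathAlg K (Qa.sum Qc) :=
  ⟨sumInl Qa Qc (Sa : Series K Qa) + sumInr Qa Qc (Tc : Series K Qc),
    add_mem (sumInl_mem _ _ _) (sumInr_mem _ _ _)⟩

/-- the inclusion `R⟨⟨Qa⟩⟩ → R⟨⟨Qa ⊕ Qc⟩⟩` on path algebras -/
noncomputable def sumInlPA {Qa Qc : Quiv V} (u : pathAlg K Qa) :
    pathAlg K (Qa.sum Qc) :=
  ⟨sumInl Qa Qc (u : Series K Qa), sumInl_mem _ _ _⟩

/-- a reduced QP: the degree-2 component of the potential vanishes -/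
def IsReduced {Q : Quiv V} (S : Series K Q) : Prop :=
  ∀ p : Q.Pth, S p ≠ 0 → p.2.length ≠ 2

/-- a trivial QP: the potential is a sum of 2-cycles whose cyclic derivatives span the
arrow span of the quiver -/
def IsTrivialQP (Q : Quiv V) (S : Series K Q) : Prop :=
  IsPotential S ∧ (∀ p : Q.Pth, S p ≠ 0 → p.2.length = 2) ∧
  ∀ e : Q.E, (unitS (Q.s e, [e]) : Series K Q) ∈
    Submodule.span K (Set.range (cycDeriv S))

variable [DecidableEq V]

/-- Witness that `(Qr, Sr, Nr)` is (a realization of) the *reduced part* of the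
decorated representation `N` of `(Q, S)`: there are a trivial QP `(C, T)` and a
right-equivalence `φ` between `(Qr, Sr) ⊕ (C, T)` and `(Q, S)`, such that `Nr` has the
same underlying spaces and decoration as `N` (up to a grading-preserving isomorphism
`ψ`), with each arrow `e` of `Qr` acting as `φ(e)` acts on `N`. -/
structure ReducedPartData (Q : Quiv V) (S : pathAlg K Q)
    (Qr : Quiv V) (Sr : pathAlg K Qr)
    (Nr : PreRep K Qr) (N : PreRep K Q) : Type 1 where
  C : Quiv V
  T : pathAlg K C
  hred : IsReduced (Sr : Series K Qr)
  htriv : IsTrivialQP C (T : Series K C)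
  qp : QPEquiv (Qr.sum C) Q (sumPA Sr T) S
  ψ : (∀ i, Nr.M i) ≃ₗ[K] (∀ i, N.M i)
  grade : ∀ (i : V) (x), ψ (vproj (K := K) Nr.M i x) = vproj (K := K) N.M i (ψ x)
  compat : ∀ (e : Qr.E) (Tm),
    N.ActsAs ((qp.φ (sumInlPA (arrowPA K Qr e)) : pathAlg K Q) : Series K Q) Tm →
    ∀ x, ψ (Nr.act e x) = Tm (ψ x)
  η : ∀ i, Nr.D i ≃ₗ[K] N.D i

/-- the QP-level statement that `(Qr, Sr)` is a reduced part of `(Q, S)` -/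
def IsReducedQPOf (Q : Quiv V) (S : pathAlg K Q) (Qr : Quiv V) (Sr : pathAlg K Qr) :
    Prop :=
  IsReduced (Sr : Series K Qr) ∧ ∃ (C : Quiv V) (T : pathAlg K C),
    IsTrivialQP C (T : Series K C) ∧ Nonempty (QPEquiv (Qr.sum C) Q (sumPA Sr T) S)

end Splitting

/-! ### Premutation and mutation of QPs and of their decorated representations -/

section Premut

variable {K : Type} [Field K]

/-- arrows of `Q` ending at `j` -/
abbrev inArrows (Q : Quiv V) (j : V) : Type := {e : Q.E // Q.t e = j}
/-- arrows of `Q` starting at `j` -/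
abbrev outArrows (Q : Quiv V) (j : V) : Type := {e : Q.E // Q.s e = j}

/-- `Q` has no 2-cycles incident to the vertex `j` -/
def No2CycleAt (Q : Quiv V) (j : V) : Prop :=
  ¬ ∃ p : Q.Pth, Q.IsCycle p ∧ p.2.length = 2 ∧ j ∈ Q.visits p

/-- The premutated quiver `μ̃_j(Q)`: arrows not incident to `j` are kept; for every
`j`-hook (2-path `a` then `b` through `j`) there is a new arrow `[ab] : s a → t b`;
every arrow incident to `j` is replaced by a reversed arrow. -/
def Quiv.premut (Q : Quiv V) (j : V) : Quiv V where
  E := {e : Q.E // Q.s e ≠ j ∧ Q.t e ≠ j} ⊕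
    ((inArrows Q j × outArrows Q j) ⊕ {e : Q.E // Q.s e = j ∨ Q.t e = j})
  s := fun x => match x with
    | .inl e => Q.s e.1
    | .inr (.inl ab) => Q.s ab.1.1
    | .inr (.inr e) => Q.t e.1
  t := fun x => match x with
    | .inl e => Q.t e.1
    | .inr (.inl ab) => Q.t ab.2.1
    | .inr (.inr e) => Q.s e.1

/-- the hook arrow `[ab]` of the premutated quiver -/
def hookE {Q : Quiv V} {j : V} (a : inArrows Q j) (b : outArrows Q j) :
    (Q.premut j).E := .inr (.inl (a, b))

/-- the reversed arrow `b*` (for `b` starting at `j`) -/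
def starOut {Q : Quiv V} {j : V} (b : outArrows Q j) : (Q.premut j).E :=
  .inr (.inr ⟨b.1, Or.inl b.2⟩)

/-- the reversed arrow `a*` (for `a` ending at `j`) -/
def starIn {Q : Quiv V} {j : V} (a : inArrows Q j) : (Q.premut j).E :=
  .inr (.inr ⟨a.1, Or.inr a.2⟩)

/-- Unhooking: replaces each kept arrow by itself and each hook arrow `[ab]` by the
2-path `a b`; undefined (`none`) on lists containing reversed arrows. -/
def unhook (Q : Quiv V) (j : V) : List (Q.premut j).E → Option (List Q.E)
  | [] => some []
  | .inl e :: l => (unhook Q j l).map (e.1 :: ·)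
  | .inr (.inl ab) :: l => (unhook Q j l).map (fun m => ab.1.1 :: ab.2.1 :: m)
  | .inr (.inr _) :: _ => none

/-- the 3-cycle `b* a* [ab]` of the premutated quiver attached to a `j`-hook -/
def hookCycle {Q : Quiv V} (j : V) (ab : inArrows Q j × outArrows Q j) :
    (Q.premut j).Pth :=
  (Q.s ab.1.1, [hookE ab.1 ab.2, starOut ab.2, starIn ab.1])

open Classical in
/-- The premutated potential `μ̃_j(S) = [S] + Δ_j(Q)`: `[S]` is obtained from `S`
(assumed to have no cyclic term starting at `j`) by replacing every `j`-hook by the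
corresponding hook arrow, and `Δ_j(Q) = ∑ b* a* [ab]`.  (The formula is gated by
well-formedness; for a potential `S` this does not change the value.) -/
noncomputable def premutPotential {Q : Quiv V} (j : V) (S : Series K Q) :
    Series K (Q.premut j) := fun p =>
  if (Q.premut j).WF p then
    ((unhook Q j p.2).elim 0 fun m => S (p.1, m)) +
      (if ∃ ab, p = hookCycle j ab then 1 else 0)
  else 0

theorem premutPotential_mem {Q : Quiv V} (j : V) (S : Series K Q) :
    premutPotential j S ∈ pathAlg K (Q.premut j) := by
  intro p hp; unfold premutPotential; rw [if_neg hp]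

/-- the premutated potential as an element of the complete path algebra -/
noncomputable def premutPA {Q : Quiv V} (j : V) (S : pathAlg K Q) :
    pathAlg K (Q.premut j) :=
  ⟨premutPotential j (S : Series K Q), premutPotential_mem j _⟩

variable [DecidableEq V]

namespace PreRep

variable {Q : Quiv V} (N : PreRep K Q)

/-- the action of a path datum of the premutated quiver on `N` (hook arrows acting as the
corresponding 2-paths, reversed arrows acting as zero) -/
noncomputable def pActPre (j : V) (p : (Q.premut j).Pth) :
    (∀ i, N.M i) →ₗ[K] (∀ i, N.M i) :=
  (unhook Q j p.2).elim 0 fun m => N.pAct (p.1, m)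

/-- the series `u` on the premutated quiver acts on `N` as the operator `T` -/
def ActsAsPre (j : V) (u : Series K (Q.premut j))
    (T : (∀ i, N.M i) →ₗ[K] (∀ i, N.M i)) : Prop :=
  ∃ fs : Finset (Q.premut j).Pth, (∀ p ∉ fs, u p • N.pActPre j p = 0) ∧
    (∑ p ∈ fs, u p • N.pActPre j p) = T

variable (j : V)

/-- `M_in = ⊕ M_{s a}`, sum over the arrows `a` ending at `j` -/
def Min : Type := ∀ a : inArrows Q j, N.M (Q.s a.1)

/-- `M_out = ⊕ M_{t b}`, sum over the arrows `b` starting at `j` -/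
def Mout : Type := ∀ b : outArrows Q j, N.M (Q.t b.1)

instance : AddCommGroup (N.Min j) := inferInstanceAs (AddCommGroup (∀ a : inArrows Q j, N.M (Q.s a.1)))
instance : Module K (N.Min j) := inferInstanceAs (Module K (∀ a : inArrows Q j, N.M (Q.s a.1)))
instance : AddCommGroup (N.Mout j) := inferInstanceAs (AddCommGroup (∀ b : outArrows Q j, N.M (Q.t b.1)))
instance : Module K (N.Mout j) := inferInstanceAs (Module K (∀ b : outArrows Q j, N.M (Q.t b.1)))

/-- the map `a : M_in → M_j` assembled from the arrows ending at `j` -/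
noncomputable def ain [Finite Q.E] : N.Min j →ₗ[K] N.M j :=
  letI : Fintype (inArrows Q j) := Fintype.ofFinite _
  ∑ a : inArrows Q j,
    (LinearMap.proj j).comp ((N.act a.1).comp
      ((LinearMap.single K N.M (Q.s a.1)).comp
        (LinearMap.proj (φ := fun a : inArrows Q j => N.M (Q.s a.1)) a)))

/-- the map `b : M_j → M_out` assembled from the arrows starting at `j` -/
noncomputable def bout : N.M j →ₗ[K] N.Mout j :=
  LinearMap.pi fun b : outArrows Q j =>
    (LinearMap.proj (Q.t b.1)).comp ((N.act b.1).comp (LinearMap.single K N.M j))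

open Classical in
/-- the condition that `c : M_out → M_in` is the matrix of the maps given by the actions
of the cyclic derivatives `∂_{[ab]}(μ̃_j S)` -/
noncomputable def IsCFor [Finite Q.E] (S : Series K Q) (c : N.Mout j →ₗ[K] N.Min j) : Prop :=
  ∀ (a : inArrows Q j) (b : outArrows Q j),
    N.ActsAsPre j (cycDeriv (premutPotential j S) (hookE a b))
      ((LinearMap.single K N.M (Q.s a.1)).comp
        (((LinearMap.proj (φ := fun a : inArrows Q j => N.M (Q.s a.1)) a).comp
            (c.comp (LinearMap.single K (fun b : outArrows Q j => N.M (Q.t b.1)) b))).comp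
          (LinearMap.proj (Q.t b.1))))

end PreRep

section BarredSpaces

variable {Q : Quiv V} (N : PreRep K Q) (j : V) [Finite Q.E]

/-- the barred space `M̄_j = ker c / im b ⊕ im c ⊕ ker a / im c ⊕ V_j` of the
premutation of a decorated representation -/
noncomputable abbrev barMj (c : N.Mout j →ₗ[K] N.Min j) : Type :=
  ((↥(LinearMap.ker c)) ⧸
      Submodule.comap (LinearMap.ker c).subtype (LinearMap.range (N.bout j)))
  × ↥(LinearMap.range c)
  × ((↥(LinearMap.ker (N.ain j))) ⧸
      Submodule.comap (LinearMap.ker (N.ain j)).subtype (LinearMap.range c))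
  × N.D j

/-- the barred decoration `V̄_j = ker b / (ker b ∩ im a)` -/
noncomputable abbrev barVj : Type :=
  (↥(LinearMap.ker (N.bout j))) ⧸
    Submodule.comap (LinearMap.ker (N.bout j)).subtype (LinearMap.range (N.ain j))

/-- the map `ā = [-pr; -c; 0; 0] : M_out → M̄_j` (given a retraction `r` onto `ker c`) -/
noncomputable def abar (c : N.Mout j →ₗ[K] N.Min j)
    (r : N.Mout j →ₗ[K] ↥(LinearMap.ker c)) : N.Mout j →ₗ[K] barMj N j c :=
  LinearMap.prod
    (-((Submodule.comap (LinearMap.ker c).subtype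
        (LinearMap.range (N.bout j))).mkQ.comp r))
    (LinearMap.prod (-(c.rangeRestrict))
      (LinearMap.prod 0 0))

/-- the map `b̄ = [0, i, i s, 0] : M̄_j → M_in` (given a section `s` of the projection
`ker a ↠ ker a / im c`) -/
noncomputable def bbar (c : N.Mout j →ₗ[K] N.Min j)
    (sσ : ((↥(LinearMap.ker (N.ain j))) ⧸
        Submodule.comap (LinearMap.ker (N.ain j)).subtype (LinearMap.range c))
      →ₗ[K] ↥(LinearMap.ker (N.ain j))) :
    barMj N j c →ₗ[K] N.Min j :=
  ((LinearMap.range c).subtype.comp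
      ((LinearMap.fst K _ _).comp (LinearMap.snd K _ _)))
  + ((LinearMap.ker (N.ain j)).subtype.comp
      (sσ.comp ((LinearMap.fst K _ _).comp
        ((LinearMap.snd K _ _).comp (LinearMap.snd K _ _)))))

open Classical in
/-- Witness that `Nt` is (a realization of) the premutation `μ̃_j` of the decorated
representation `N` of `(Q, S₀)` (where no cyclic term of `S₀` starts at `j`), following
Derksen–Weyman–Zelevinsky: the spaces away from `j` are unchanged, the space at `j` is
`ker c/im b ⊕ im c ⊕ ker a/im c ⊕ V_j`, kept arrows and hook arrows act as in `N`, and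
the reversed arrows act through the maps `ā`, `b̄` determined by choices of a retraction
`r` and a section `s`. -/
structure PremutRepData (S₀ : Series K Q) (Nt : PreRep K (Q.premut j))
    (N : PreRep K Q) : Type 1 where
  c : N.Mout j →ₗ[K] N.Min j
  hc : N.IsCFor j S₀ c
  r : N.Mout j →ₗ[K] ↥(LinearMap.ker c)
  hr : ∀ x : ↥(LinearMap.ker c), r x.1 = x
  sσ : ((↥(LinearMap.ker (N.ain j))) ⧸
      Submodule.comap (LinearMap.ker (N.ain j)).subtype (LinearMap.range c))
    →ₗ[K] ↥(LinearMap.ker (N.ain j))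
  hs : ∀ y, (Submodule.comap (LinearMap.ker (N.ain j)).subtype
      (LinearMap.range c)).mkQ (sσ y) = y
  ψ : ∀ i : V, i ≠ j → (Nt.M i ≃ₗ[K] N.M i)
  ψj : Nt.M j ≃ₗ[K] barMj N j c
  hInl : ∀ (e : {e : Q.E // Q.s e ≠ j ∧ Q.t e ≠ j}) (x : ∀ i, Nt.M i),
    (ψ (Q.t e.1) e.2.2) ((Nt.act (Sum.inl e) x) (Q.t e.1))
      = N.actHom e.1 ((ψ (Q.s e.1) e.2.1) (x (Q.s e.1)))
  hHook : ∀ (a : inArrows Q j) (b : outArrows Q j)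
      (ha : Q.s a.1 ≠ j) (hb : Q.t b.1 ≠ j) (x : ∀ i, Nt.M i),
    (ψ (Q.t b.1) hb) ((Nt.act (hookE a b) x) (Q.t b.1))
      = (N.act b.1 (N.act a.1 (LinearMap.single K N.M (Q.s a.1)
          ((ψ (Q.s a.1) ha) (x (Q.s a.1)))))) (Q.t b.1)
  hStarOut : ∀ (b : outArrows Q j) (hb : Q.t b.1 ≠ j) (x : ∀ i, Nt.M i),
    ψj ((Nt.act (starOut b) x) j)
      = abar N j c r (LinearMap.single K (fun b : outArrows Q j => N.M (Q.t b.1)) b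
          ((ψ (Q.t b.1) hb) (x (Q.t b.1))))
  hStarIn : ∀ (a : inArrows Q j) (ha : Q.s a.1 ≠ j) (x : ∀ i, Nt.M i),
    (ψ (Q.s a.1) ha) ((Nt.act (starIn a) x) (Q.s a.1))
      = bbar N j c sσ (ψj (x j)) a
  hDec : ∀ i : V, i ≠ j → Nonempty (Nt.D i ≃ₗ[K] N.D i)
  hDecj : Nonempty (Nt.D j ≃ₗ[K] barVj N j)

end BarredSpaces

/-- `N1` (a decorated representation of `(Q1, S1)`) is a mutation `μ_j` of the decorated
representation `N` of `(Q, S)`: after replacing `S` by a cyclically equivalent potential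
`S₀` none of whose terms starts at `j`, `N1` is a reduced part of a premutation of `N`
at `j` (and `(Q1, S1)` a reduced part of the premutated QP). -/
def IsMutationRepOf {Q : Quiv V} [Finite Q.E] (j : V) (S : pathAlg K Q)
    {Q1 : Quiv V} (S1 : pathAlg K Q1) (N1 : PreRep K Q1) (N : PreRep K Q) : Prop :=
  No2CycleAt Q j ∧ ∃ S₀ : pathAlg K Q, IsPotential (S₀ : Series K Q) ∧
    CyclicEquiv ((S₀ : Series K Q)) ((S : Series K Q)) ∧
    (∀ p : Q.Pth, (S₀ : Series K Q) p ≠ 0 → p.1 ≠ j) ∧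
    ∃ Nt : PreRep K (Q.premut j),
      Nonempty (PremutRepData j ((S₀ : Series K Q)) Nt N) ∧
      Nonempty (ReducedPartData (Q.premut j) (premutPA j S₀) Q1 S1 N1 Nt)

/-- `(Q', S')` is a mutation `μ_j` of the QP `(Q, S)`. -/
def IsMutationQPOf {Q : Quiv V} (j : V) (S : pathAlg K Q)
    (Q' : Quiv V) (S' : pathAlg K Q') : Prop :=
  No2CycleAt Q j ∧ ∃ S₀ : pathAlg K Q, IsPotential (S₀ : Series K Q) ∧
    CyclicEquiv ((S₀ : Series K Q)) ((S : Series K Q)) ∧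
    (∀ p : Q.Pth, (S₀ : Series K Q) p ≠ 0 → p.1 ≠ j) ∧
    IsReducedQPOf (Q.premut j) (premutPA j S₀) Q' S'

/-- a quiver is 2-acyclic if it has no 2-cycles -/
def TwoAcyclic (Q : Quiv V) : Prop := ¬ ∃ p : Q.Pth, Q.IsCycle p ∧ p.2.length = 2

end Premut

end QPF


namespace QPF

/-! ### The QP of the canonical (ideal) triangulation of the once-punctured torus

Vertices `0, 1, 2`; arrows `c1 = 0, c2 = 1 : 0 → 1`, `b1 = 2, b2 = 3 : 1 → 2`,
`a1 = 4, a2 = 5 : 2 → 0`.  Paths are composed as functions (right-to-left), so the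
3-cycle `a1 b1 c1` is traversed `c1`, then `b1`, then `a1`; in list form (arrows listed
in traversal order, based at the start vertex) it is `(0, [0, 2, 4])`. -/

def torusQ : Quiv (Fin 3) where
  E := Fin 6
  s := fun e => ![0, 0, 1, 1, 2, 2] e
  t := fun e => ![1, 1, 2, 2, 0, 0] e

/-- the 3-cycle `a1 b1 c1` -/
def torusCyc1 : torusQ.Pth := ((0 : Fin 3), ([0, 2, 4] : List (Fin 6)))
/-- the 3-cycle `a2 b2 c2` -/
def torusCyc2 : torusQ.Pth := ((0 : Fin 3), ([1, 3, 5] : List (Fin 6)))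
/-- the 6-cycle `a1 b2 c1 a2 b1 c2` -/
def torusCyc6 : torusQ.Pth := ((0 : Fin 3), ([1, 2, 5, 0, 3, 4] : List (Fin 6)))
/-- the 6-cycle `a2 b1 c2 a1 b2 c1` -/
def torusCyc6' : torusQ.Pth := ((0 : Fin 3), ([0, 3, 4, 1, 2, 5] : List (Fin 6)))

theorem torus_wf1 : torusQ.WF torusCyc1 := by
  constructor <;> simp [torusCyc1, torusQ, List.Chain', List.isChain_cons_cons, Quiv.WF] <;>
    first | decide | (intro e he; cases he; decide)
theorem torus_wf2 : torusQ.WF torusCyc2 := by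
  constructor <;> simp [torusCyc2, torusQ, List.Chain', List.isChain_cons_cons, Quiv.WF] <;>
    first | decide | (intro e he; cases he; decide)
theorem torus_wf6 : torusQ.WF torusCyc6 := by
  constructor <;> simp [torusCyc6, torusQ, List.Chain', List.isChain_cons_cons, Quiv.WF] <;>
    first | decide | (intro e he; cases he; decide)
theorem torus_wf6' : torusQ.WF torusCyc6' := by
  constructor <;> simp [torusCyc6', torusQ, List.Chain', List.isChain_cons_cons, Quiv.WF] <;>
    first | decide | (intro e he; cases he; decide)

variable (K : Type) [Field K]

/-- the potential `S = a1 b1 c1 + a2 b2 c2 + x · a1 b2 c1 a2 b1 c2` of the canonical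
triangulation of the once-punctured torus -/
noncomputable def torusS (x : K) : Series K torusQ :=
  unitS torusCyc1 + unitS torusCyc2 + x • unitS torusCyc6

theorem torusS_mem (x : K) : torusS K x ∈ pathAlg K torusQ := by
  refine add_mem (add_mem (unitS_mem torus_wf1) (unitS_mem torus_wf2)) ?_
  exact Subalgebra.smul_mem _ (unitS_mem torus_wf6) x

/-- the canonical once-punctured-torus potential as an element of `R⟨⟨Q⟩⟩` -/
noncomputable def torusSPA (x : K) : pathAlg K torusQ := ⟨torusS K x, torusS_mem K x⟩

end QPF

namespace QPF

/-- the ordinary (non-complete) path algebra `R⟨Q⟩`: finitely supported series with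
well-formed support -/
def ordPathAlg (K : Type) [Field K] {V : Type} (Q : Quiv V) : Set (Series K Q) :=
  {u | u ∈ pathAlg K Q ∧ (Function.support u).Finite}

/-- the two-sided ideal of the ordinary path algebra generated by a set `T`:
finite sums `∑ aᵢ * gᵢ * bᵢ` with `aᵢ, bᵢ ∈ R⟨Q⟩` and `gᵢ ∈ T` -/
def ordTwoSidedSpan (K : Type) [Field K] {V : Type} (Q : Quiv V)
    (T : Set (Series K Q)) : Set (Series K Q) :=
  {z | ∃ l : List (Series K Q × Series K Q × Series K Q),
    (∀ q ∈ l, q.1 ∈ ordPathAlg K Q ∧ q.2.1 ∈ T ∧ q.2.2 ∈ ordPathAlg K Q) ∧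
    (l.map fun q => q.1 * q.2.1 * q.2.2).sum = z}

end QPF

/-!
Send an arrow `e : i → j` to the matrix unit `E_{ij}` over `K[T;T⁻¹]` scaled by a unit `ρ e`.
This is multiplicative on the ordinary path algebra `R⟨Q⟩` (it does not extend to `R⟨⟨Q⟩⟩`).
Since the weights commute, `∂ₑ(C) · ρ e` has the weight of `C` for a cycle `C` passing once
through `e`. Every arrow lies once on the 6-cycle and on exactly one 3-cycle, so every `∂ₑ S`
maps to `0` as soon as `w(a1b1c1) = w(a2b2c2) = -x · w(a1b2c1a2b1c2)`.
The choice `ρ c1 = T`, `ρ c2 = -x⁻¹`, `ρ a1 = -x⁻¹ T⁻¹` (all other arrows `1`) achieves this,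
while the powers of the cycle `a2b2c1` map to the linearly independent `Tⁿ E₁₁`.
-/

namespace QPF

open Series

namespace Quiv

variable {V : Type} {Q : Quiv V}

theorem wf_cons_iff {i : V} {e : Q.E} {l : List Q.E} :
    Q.WF (i, e :: l) ↔ Q.s e = i ∧ Q.WF (Q.t e, l) := by
  change List.IsChain _ (e :: l) ∧ _ ↔ _ ∧ List.IsChain _ l ∧ _
  simp only [List.isChain_cons, List.head?_cons, Option.mem_def, Option.some.injEq,
    forall_eq', eq_comm (a := Q.s _)]
  tauto

theorem WF.of_append {i : V} {a b : List Q.E} (h : Q.WF (i, a ++ b)) :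
    Q.WF (i, a) ∧ Q.WF (Q.endV (i, a), b) := by
  induction a generalizing i with
  | nil => exact ⟨wf_nil Q i, h⟩
  | cons f a ih =>
    obtain ⟨hf, h⟩ := wf_cons_iff.mp h
    obtain ⟨ha, hb⟩ := ih h
    exact ⟨wf_cons_iff.mpr ⟨hf, ha⟩, by rwa [endV_cons]⟩

theorem IsCycle.rotate {i : V} {e : Q.E} {A B : List Q.E} (hc : Q.IsCycle (i, A ++ e :: B)) :
    Q.endV (Q.t e, B) = i ∧ Q.WF (Q.t e, B ++ A) ∧ Q.endV (Q.t e, B ++ A) = Q.s e := by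
  obtain ⟨hwf, hend, -⟩ := hc
  obtain ⟨hA, heB⟩ := hwf.of_append
  obtain ⟨hse, hB⟩ := wf_cons_iff.mp heB
  have hBi : Q.endV (Q.t e, B) = i := by rwa [endV_append, endV_cons] at hend
  refine ⟨hBi, hB.append (hBi ▸ hA), ?_⟩
  rw [endV_append, hBi, hse]

def cyclePow (c : Q.Pth) (n : ℕ) : Q.Pth := (c.1, (List.replicate n c.2).flatten)

theorem wf_cyclePow {c : Q.Pth} (hwf : Q.WF c) (hend : Q.endV c = c.1) (n : ℕ) :
    Q.WF (Q.cyclePow c n) ∧ Q.endV (Q.cyclePow c n) = c.1 := by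
  obtain ⟨i, l⟩ := c
  induction n with
  | zero => exact ⟨wf_nil Q i, rfl⟩
  | succ n ih =>
    simp only [cyclePow, List.replicate_succ, List.flatten_cons] at ih ⊢
    exact ⟨hwf.append (by rw [hend]; exact ih.1), by rw [endV_append, hend, ih.2]⟩

end Quiv

theorem sum_map_splits_ite {α M : Type} [DecidableEq α] [AddCommMonoid M] (l : List α)
    (q₀ : List α × List α) (c : M) :
    ((splits l).map fun q => if q = q₀ then c else 0).sum
      = if q₀.1 ++ q₀.2 = l then c else 0 := by
  obtain ⟨a, b⟩ := q₀
  induction l generalizing a with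
  | nil => cases a <;> cases b <;> simp [splits_nil]
  | cons e l ih =>
    rw [splits_cons]
    cases a with
    | nil => simp [List.map_map, Function.comp_def, eq_comm]
    | cons f a =>
      by_cases hef : e = f
      · subst hef; simpa [List.map_map, Function.comp_def, Prod.ext_iff] using ih a
      · simp [List.map_map, Function.comp_def, hef, Ne.symm hef]

section SeriesLemmas

variable {V : Type} {Q : Quiv V} {K : Type} [Field K]

open Classical in
theorem unitS_apply (p q : Q.Pth) : (unitS p : Series K Q) q = if q = p then 1 else 0 := rfl

open Classical in
theorem unitS_mul (p q : Q.Pth) :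
    (unitS p * unitS q : Series K Q)
      = if Q.endV p = q.1 then unitS (p.1, p.2 ++ q.2) else 0 := by
  funext ⟨i, l⟩
  have hterm : ∀ r : List Q.E × List Q.E,
      (unitS p : Series K Q) (i, r.1) * unitS q (Q.endV (i, r.1), r.2)
        = if r = (p.2, q.2) then (if i = p.1 ∧ Q.endV p = q.1 then 1 else 0) else 0 := by
    rintro ⟨r₁, r₂⟩
    obtain ⟨p₁, p₂⟩ := p
    obtain ⟨q₁, q₂⟩ := q
    simp only [unitS_apply, Prod.mk.injEq]
    split_ifs <;> simp_all
  rw [mul_apply, List.map_congr_left fun r _ => hterm r, sum_map_splits_ite]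
  split_ifs <;> simp_all [unitS_apply, eq_comm]

theorem cycDeriv_add (S S' : Series K Q) (e : Q.E) :
    cycDeriv (S + S') e = cycDeriv S e + cycDeriv S' e := by
  funext p
  rw [Series.add_apply]
  simp only [cycDeriv, Series.add_apply]
  split_ifs
  · exact lsum_add _ _ _
  · rw [add_zero]

theorem cycDeriv_smul (c : K) (S : Series K Q) (e : Q.E) :
    cycDeriv (c • S) e = c • cycDeriv S e := by
  funext p
  rw [Series.smul_apply]
  simp only [cycDeriv, Series.smul_apply]
  split_ifs
  · exact lsum_mul_left _ _ _
  · rw [mul_zero]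

theorem cycDeriv_unitS_of_notMem {c : Q.Pth} {e : Q.E} (he : e ∉ c.2) :
    cycDeriv (unitS c : Series K Q) e = 0 := by
  classical
  funext p
  simp only [cycDeriv, Series.zero_apply]
  split_ifs
  · refine List.sum_eq_zero fun y hy => ?_
    obtain ⟨r, -, rfl⟩ := List.mem_map.mp hy
    rw [unitS_apply, if_neg]
    rintro rfl
    simp at he
  · rfl

open Classical in
theorem cycDeriv_unitS_append_cons {i : V} {e : Q.E} {A B : List Q.E}
    (hc : Q.IsCycle (i, A ++ e :: B)) (hA : e ∉ A) (hB : e ∉ B) :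
    cycDeriv (unitS (i, A ++ e :: B) : Series K Q) e = unitS (Q.t e, B ++ A) := by
  obtain ⟨hBi, hwf, -⟩ := hc.rotate
  funext ⟨j, l⟩
  have hterm : ∀ r : List Q.E × List Q.E,
      (unitS (i, A ++ e :: B) : Series K Q) (Q.endV (j, r.1), r.2 ++ e :: r.1)
        = if r = (B, A) then (if Q.endV (j, B) = i then 1 else 0) else 0 := by
    rintro ⟨r₁, r₂⟩
    have hsplit : r₂ ++ e :: r₁ = A ++ e :: B ↔ r₂ = A ∧ r₁ = B := by
      rw [eq_comm, List.append_cons_inj_of_notMem hA hB]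
      simp [eq_comm]
    simp only [unitS_apply, Prod.mk.injEq, hsplit]
    split_ifs <;> simp_all
  simp only [cycDeriv]
  rw [List.map_congr_left fun r _ => hterm r, sum_map_splits_ite, unitS_apply]
  split_ifs <;> simp_all

theorem exists_cycDeriv_unitS_eq_unitS [DecidableEq Q.E] {c : Q.Pth} {e : Q.E}
    (hc : Q.IsCycle c) (he : c.2.count e = 1) :
    ∃ p : Q.Pth, p.1 = Q.t e ∧ Q.endV p = Q.s e ∧ (e :: p.2).Perm c.2 ∧
      cycDeriv (unitS c : Series K Q) e = unitS p := by
  obtain ⟨i, l⟩ := c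
  obtain ⟨A, B, rfl⟩ := List.append_of_mem (List.count_pos_iff.mp (he ▸ Nat.one_pos))
  have hAB : e ∉ A ∧ e ∉ B := by
    simp only [List.count_append, List.count_cons_self] at he
    exact ⟨List.count_eq_zero.mp (by omega), List.count_eq_zero.mp (by omega)⟩
  refine ⟨(Q.t e, B ++ A), rfl, hc.rotate.2.2, ?_, cycDeriv_unitS_append_cons hc hAB.1 hAB.2⟩
  exact (List.perm_append_comm.cons e).trans List.perm_middle.symm

end SeriesLemmas

section Representation

variable {V : Type} {Q : Quiv V} {K : Type} [Field K]

theorem support_mul_subset (u v : Series K Q) :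
    Function.support (u * v) ⊆ (fun pq : Q.Pth × Q.Pth => (pq.1.1, pq.1.2 ++ pq.2.2)) ''
      (Function.support u ×ˢ Function.support v) := by
  rintro ⟨i, l⟩ h
  obtain ⟨y, hy, hy0⟩ := List.exists_mem_ne_zero_of_sum_ne_zero h
  obtain ⟨r, hr, rfl⟩ := List.mem_map.mp hy
  refine ⟨((i, r.1), (Q.endV (i, r.1), r.2)),
    ⟨left_ne_zero_of_mul hy0, right_ne_zero_of_mul hy0⟩, ?_⟩
  simp [mem_splits hr]

theorem support_one_subset :
    Function.support (1 : Series K Q) ⊆ Set.range fun i : V => (i, ([] : List Q.E)) := by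
  rintro ⟨i, _ | ⟨e, l⟩⟩ h
  · exact ⟨i, rfl⟩
  · exact absurd (one_apply_cons i e l) h

def finSupp (K : Type) [Field K] (Q : Quiv V) [Finite V] : Subalgebra K (Series K Q) where
  carrier := {u | (Function.support u).Finite}
  mul_mem' {u v} hu hv := ((hu.prod hv).image _).subset (support_mul_subset u v)
  one_mem' := (Set.finite_range _).subset support_one_subset
  add_mem' {u v} hu hv := (hu.union hv).subset (Function.support_add u v)
  zero_mem' := Set.finite_empty.subset fun _ hp => hp rfl
  algebraMap_mem' c := by
    rw [Algebra.algebraMap_eq_smul_one]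
    exact ((Set.finite_range _).subset support_one_subset).subset
      (Function.support_const_smul_subset c _)

theorem unitS_mem_finSupp [Finite V] (p : Q.Pth) : (unitS p : Series K Q) ∈ finSupp K Q :=
  (Set.finite_singleton p).subset fun q hq => by
    classical
    by_contra h
    exact hq (by rw [unitS_apply, if_neg (Set.mem_singleton_iff.not.mp h)])

theorem Series.sum_apply {ι : Type} (s : Finset ι) (f : ι → Series K Q) (p : Q.Pth) :
    (∑ i ∈ s, f i) p = ∑ i ∈ s, f i p :=
  Finset.sum_apply p s f

theorem eq_sum_smul_unitS {u : Series K Q} {s : Finset Q.Pth} (hs : Function.support u ⊆ s) :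
    u = ∑ p ∈ s, u p • unitS p := by
  funext q
  rw [Series.sum_apply]
  simp only [unitS_apply, Series.smul_apply, mul_ite, mul_one, mul_zero]
  by_cases hq : q ∈ s
  · exact ((Finset.sum_eq_single q (fun p _ hp => if_neg hp.symm) (absurd hq)).trans
      (if_pos rfl)).symm
  · refine (Function.notMem_support.mp fun h => hq (hs h)).trans ?_
    exact (Finset.sum_eq_zero fun p hp => if_neg fun h : q = p => hq (h ▸ hp)).symm

variable {A : Type} [Ring A] [Algebra K A] (ρ : Q.E → A)

def pathWeight (l : List Q.E) : A := (l.map ρ).prod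

theorem pathWeight_append (l l' : List Q.E) :
    pathWeight ρ (l ++ l') = pathWeight ρ l * pathWeight ρ l' := by
  simp [pathWeight]

theorem pathWeight_cyclePow (c : Q.Pth) (n : ℕ) :
    pathWeight ρ (Q.cyclePow c n).2 = pathWeight ρ c.2 ^ n := by
  simp [pathWeight, Quiv.cyclePow, List.map_flatten, List.prod_flatten, List.map_replicate]

variable [DecidableEq V]

def pathMatrix (p : Q.Pth) : Matrix V V A := Matrix.single p.1 (Q.endV p) (pathWeight ρ p.2)

-- `∑ᶠ` is `0` on series of infinite support; only the values on `finSupp` matter.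
noncomputable def pathRep (u : Series K Q) : Matrix V V A := ∑ᶠ p, u p • pathMatrix ρ p

theorem pathRep_eq_sum {u : Series K Q} {s : Finset Q.Pth} (hs : Function.support u ⊆ s) :
    pathRep ρ u = ∑ p ∈ s, u p • pathMatrix ρ p :=
  finsum_eq_finsetSum_of_support_subset _ ((Function.support_smul_subset_left _ _).trans hs)

theorem pathRep_zero : pathRep ρ (0 : Series K Q) = 0 := by
  simp [pathRep]

theorem pathRep_unitS (p : Q.Pth) : pathRep ρ (unitS p : Series K Q) = pathMatrix ρ p := by
  classical
  rw [pathRep_eq_sum ρ (s := {p}), Finset.sum_singleton, unitS_apply, if_pos rfl, one_smul]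
  intro q hq
  by_contra h
  exact hq (by rw [unitS_apply, if_neg (Finset.mem_singleton.not.mp h)])

theorem pathRep_smul (c : K) (u : Series K Q) : pathRep ρ (c • u) = c • pathRep ρ u := by
  simp only [pathRep, smul_finsum, smul_smul, Series.smul_apply]

variable [Fintype V]

theorem pathMatrix_mul_pathMatrix (p q : Q.Pth) :
    pathMatrix ρ p * pathMatrix ρ q
      = if Q.endV p = q.1 then pathMatrix ρ (p.1, p.2 ++ q.2) else 0 := by
  unfold pathMatrix
  split_ifs with h
  · rw [h, Matrix.single_mul_single_same, pathWeight_append, Quiv.endV_append]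
    simp [h]
  · exact Matrix.single_mul_single_of_ne _ _ _ _ h _

theorem pathRep_add {u v : Series K Q} (hu : u ∈ finSupp K Q) (hv : v ∈ finSupp K Q) :
    pathRep ρ (u + v) = pathRep ρ u + pathRep ρ v := by
  simp only [pathRep, Series.add_apply, add_smul]
  exact finsum_add_distrib (hu.subset (Function.support_smul_subset_left (fun p => u p) _))
    (hv.subset (Function.support_smul_subset_left (fun p => v p) _))

theorem pathRep_sum {ι : Type} (s : Finset ι) (f : ι → Series K Q)
    (hf : ∀ i ∈ s, f i ∈ finSupp K Q) :
    pathRep ρ (∑ i ∈ s, f i) = ∑ i ∈ s, pathRep ρ (f i) := by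
  classical
  induction s using Finset.induction_on with
  | empty => exact pathRep_zero ρ
  | insert i s hi ih =>
    rw [Finset.forall_mem_insert] at hf
    rw [Finset.sum_insert hi, Finset.sum_insert hi,
      pathRep_add ρ hf.1 (Subalgebra.sum_mem _ hf.2), ih hf.2]

theorem pathRep_unitS_mul (p q : Q.Pth) :
    pathRep ρ (unitS p * unitS q : Series K Q) = pathMatrix ρ p * pathMatrix ρ q := by
  rw [unitS_mul, pathMatrix_mul_pathMatrix]
  split_ifs
  · exact pathRep_unitS ρ _
  · exact pathRep_zero ρ

theorem pathRep_mul {u v : Series K Q} (hu : u ∈ finSupp K Q) (hv : v ∈ finSupp K Q) :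
    pathRep ρ (u * v) = pathRep ρ u * pathRep ρ v := by
  have hs : Function.support u ⊆ hu.toFinset := hu.coe_toFinset.superset
  have ht : Function.support v ⊆ hv.toFinset := hv.coe_toFinset.superset
  have hmem : ∀ p q, (u p * v q) • (unitS p * unitS q : Series K Q) ∈ finSupp K Q :=
    fun p q => Subalgebra.smul_mem _ (mul_mem (unitS_mem_finSupp p) (unitS_mem_finSupp q)) _
  calc pathRep ρ (u * v)
      = pathRep ρ (∑ p ∈ hu.toFinset, ∑ q ∈ hv.toFinset,
          (u p * v q) • (unitS p * unitS q : Series K Q)) := by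
        conv_lhs => rw [eq_sum_smul_unitS hs, eq_sum_smul_unitS ht]
        simp_rw [Finset.sum_mul_sum, smul_mul_smul_comm]
    _ = ∑ p ∈ hu.toFinset, ∑ q ∈ hv.toFinset,
          (u p * v q) • (pathMatrix ρ p * pathMatrix ρ q) := by
        rw [pathRep_sum ρ _ _ fun p _ => Subalgebra.sum_mem _ fun q _ => hmem p q]
        refine Finset.sum_congr rfl fun p _ => ?_
        rw [pathRep_sum ρ _ _ fun q _ => hmem p q]
        refine Finset.sum_congr rfl fun q _ => ?_
        rw [pathRep_smul, pathRep_unitS_mul]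
    _ = pathRep ρ u * pathRep ρ v := by
        rw [pathRep_eq_sum ρ hs, pathRep_eq_sum ρ ht, Finset.sum_mul_sum]
        simp_rw [smul_mul_smul_comm]

theorem pathRep_eq_zero_of_mem_ordTwoSidedSpan {T : Set (Series K Q)}
    (hT : ∀ g ∈ T, g ∈ finSupp K Q ∧ pathRep ρ g = 0) {z : Series K Q}
    (hz : z ∈ ordTwoSidedSpan K Q T) : z ∈ finSupp K Q ∧ pathRep ρ z = 0 := by
  obtain ⟨l, hl, rfl⟩ := hz
  induction l with
  | nil => exact ⟨zero_mem _, pathRep_zero ρ⟩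
  | cons q l ih =>
    obtain ⟨⟨-, ha⟩, hg, ⟨-, hb⟩⟩ := hl q List.mem_cons_self
    obtain ⟨hgf, hg0⟩ := hT _ hg
    obtain ⟨hlf, hl0⟩ := ih fun r hr => hl r (List.mem_cons_of_mem q hr)
    have hag : q.1 * q.2.1 ∈ finSupp K Q := mul_mem ha hgf
    rw [List.map_cons, List.sum_cons]
    refine ⟨add_mem (mul_mem hag hb) hlf, ?_⟩
    rw [pathRep_add ρ (mul_mem hag hb) hlf, pathRep_mul ρ hag hb, pathRep_mul ρ ha hgf, hg0, hl0,
      mul_zero, zero_mul, add_zero]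

theorem not_exists_finset_spanning_mod_of_pathRep {T : Set (Series K Q)}
    (hT : ∀ g ∈ T, g ∈ finSupp K Q ∧ pathRep ρ g = 0) (w : ℕ → Series K Q)
    (hw : ∀ n, w n ∈ ordPathAlg K Q) (hind : LinearIndependent K fun n => pathRep ρ (w n)) :
    ¬ ∃ fs : Finset (Series K Q), (↑fs : Set (Series K Q)) ⊆ ordPathAlg K Q ∧
      ∀ u ∈ ordPathAlg K Q, ∃ c : Series K Q → K,
        u - (∑ v ∈ fs, c v • v) ∈ ordTwoSidedSpan K Q T := by
  rintro ⟨fs, hfs, hspan⟩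
  let N := Submodule.span K (pathRep ρ '' (fs : Set (Series K Q)))
  have hmem : ∀ u ∈ ordPathAlg K Q, pathRep ρ u ∈ N := by
    intro u hu
    obtain ⟨c, hc⟩ := hspan u hu
    obtain ⟨hcf, hc0⟩ := pathRep_eq_zero_of_mem_ordTwoSidedSpan ρ hT hc
    have hf : ∀ v ∈ fs, c v • v ∈ finSupp K Q := fun v hv => Subalgebra.smul_mem _ (hfs hv).2 _
    rw [← sub_add_cancel u (∑ v ∈ fs, c v • v), pathRep_add ρ hcf (Subalgebra.sum_mem _ hf), hc0,
      zero_add, pathRep_sum ρ _ _ hf]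
    refine Submodule.sum_mem _ fun v hv => ?_
    rw [pathRep_smul]
    exact Submodule.smul_mem _ _ (Submodule.subset_span (Set.mem_image_of_mem _ hv))
  have : Module.Finite K N := FiniteDimensional.span_of_finite K (fs.finite_toSet.image _)
  exact Module.Finite.not_linearIndependent_of_infinite (R := K) _
    (LinearIndependent.of_comp N.subtype (v := fun n => ⟨pathRep ρ (w n), hmem _ (hw n)⟩) hind)

end Representation

section CommRepresentation

variable {V : Type} [Fintype V] [DecidableEq V] {Q : Quiv V} [DecidableEq Q.E] {K : Type} [Field K]
  {A : Type} [CommRing A] [Algebra K A] (ρ : Q.E → A)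

theorem exists_pathRep_cycDeriv_unitS {c : Q.Pth} {e : Q.E} (hc : Q.IsCycle c)
    (he : c.2.count e ≤ 1) :
    ∃ r : A, r * ρ e = c.2.count e • pathWeight ρ c.2 ∧
      cycDeriv (unitS c : Series K Q) e ∈ finSupp K Q ∧
      pathRep ρ (cycDeriv (unitS c : Series K Q) e) = Matrix.single (Q.t e) (Q.s e) r := by
  rcases Nat.le_one_iff_eq_zero_or_eq_one.mp he with h0 | h1
  · rw [cycDeriv_unitS_of_notMem (List.count_eq_zero.mp h0)]
    exact ⟨0, by simp [h0], zero_mem _, by rw [pathRep_zero, Matrix.single_zero]⟩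
  · obtain ⟨p, hp1, hpend, hperm, hd⟩ := exists_cycDeriv_unitS_eq_unitS (K := K) hc h1
    refine ⟨pathWeight ρ p.2, ?_, hd ▸ unitS_mem_finSupp p, ?_⟩
    · rw [h1, one_smul, pathWeight, pathWeight, ← (hperm.map ρ).prod_eq]
      simp [mul_comm]
    · rw [hd, pathRep_unitS, pathMatrix, hp1, hpend]

end CommRepresentation

open LaurentPolynomial in
theorem linearIndependent_single_T {K V : Type} [Field K] [DecidableEq V] (i j : V) :
    LinearIndependent K fun n : ℕ => Matrix.single i j (T n : K[T;T⁻¹]) := by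
  refine LinearIndependent.of_comp (Matrix.entryLinearMap K K[T;T⁻¹] i j) ?_
  convert (AddMonoidAlgebra.basis ℤ K).linearIndependent.comp _ Nat.cast_injective using 1
  funext n
  simp only [Function.comp_apply, Matrix.entryLinearMap_apply, Matrix.single_apply_same]
  rfl

section Torus

instance : DecidableEq torusQ.E := inferInstanceAs (DecidableEq (Fin 6))
instance : Fintype torusQ.E := inferInstanceAs (Fintype (Fin 6))

open LaurentPolynomial

variable {K : Type} [Field K]

noncomputable def torusWeight (x : K) : torusQ.E → K[T;T⁻¹] :=
  ![T 1, C (-x⁻¹), 1, 1, C (-x⁻¹) * T (-1), 1]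

def torusLoop : torusQ.Pth := ((0 : Fin 3), ([0, 3, 5] : List (Fin 6)))

theorem isCycle_torusCyc1 : torusQ.IsCycle torusCyc1 := ⟨torus_wf1, by decide, by decide⟩
theorem isCycle_torusCyc2 : torusQ.IsCycle torusCyc2 := ⟨torus_wf2, by decide, by decide⟩
theorem isCycle_torusCyc6 : torusQ.IsCycle torusCyc6 := ⟨torus_wf6, by decide, by decide⟩

theorem count_torusCyc (e : torusQ.E) :
    torusCyc1.2.count e ≤ 1 ∧ torusCyc2.2.count e ≤ 1 ∧
      torusCyc1.2.count e + torusCyc2.2.count e = 1 ∧ torusCyc6.2.count e = 1 := by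
  revert e
  decide

theorem pathWeight_torusWeight (x : K) (l : List (Fin 6)) :
    pathWeight (torusWeight x) l = (l.map fun e : Fin 6 => torusWeight x e).prod := rfl

theorem pathWeight_torusCyc1 (x : K) : pathWeight (torusWeight x) torusCyc1.2 = C (-x⁻¹) :=
  (pathWeight_torusWeight x [0, 2, 4]).trans (by simp [torusWeight])

theorem pathWeight_torusCyc2 (x : K) : pathWeight (torusWeight x) torusCyc2.2 = C (-x⁻¹) :=
  (pathWeight_torusWeight x [1, 3, 5]).trans (by simp [torusWeight])

theorem pathWeight_torusCyc6 (x : K) : pathWeight (torusWeight x) torusCyc6.2 = C (-x⁻¹) ^ 2 :=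
  (pathWeight_torusWeight x [1, 2, 5, 0, 3, 4]).trans (by simp [torusWeight, sq])

theorem isUnit_torusWeight {x : K} (hx : x ≠ 0) (e : torusQ.E) : IsUnit (torusWeight x e) := by
  fin_cases e <;> simp [torusWeight, isUnit_T, hx]

theorem cycDeriv_torusS (x : K) (e : torusQ.E) :
    cycDeriv (torusS K x) e = cycDeriv (unitS torusCyc1) e + cycDeriv (unitS torusCyc2) e
      + x • cycDeriv (unitS torusCyc6) e := by
  rw [torusS, cycDeriv_add, cycDeriv_add, cycDeriv_smul]

theorem pathRep_cycDeriv_torusS {x : K} (hx : x ≠ 0) (e : torusQ.E) :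
    cycDeriv (torusS K x) e ∈ finSupp K torusQ ∧
      pathRep (torusWeight x) (cycDeriv (torusS K x) e) = 0 := by
  obtain ⟨h₁, h₂, h₁₂, h₆⟩ := count_torusCyc e
  obtain ⟨r₁, hr₁, hf₁, hp₁⟩ :=
    exists_pathRep_cycDeriv_unitS (K := K) (torusWeight x) isCycle_torusCyc1 h₁
  obtain ⟨r₂, hr₂, hf₂, hp₂⟩ :=
    exists_pathRep_cycDeriv_unitS (K := K) (torusWeight x) isCycle_torusCyc2 h₂
  obtain ⟨r₆, hr₆, hf₆, hp₆⟩ :=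
    exists_pathRep_cycDeriv_unitS (K := K) (torusWeight x) isCycle_torusCyc6 h₆.le
  have hr : r₁ + r₂ + x • r₆ = 0 := by
    refine (isUnit_torusWeight hx e).mul_left_eq_zero.mp ?_
    rw [add_mul, add_mul, smul_mul_assoc, hr₁, hr₂, hr₆, h₆, pathWeight_torusCyc1,
      pathWeight_torusCyc2, pathWeight_torusCyc6, ← add_smul, h₁₂, one_smul, one_smul,
      smul_eq_C_mul, ← map_pow, ← map_mul, ← map_add]
    rw [show -x⁻¹ + x * (-x⁻¹) ^ 2 = 0 by field_simp; ring, map_zero]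
  have hf₁₂ := add_mem hf₁ hf₂
  have hf₆x := Subalgebra.smul_mem _ hf₆ x
  rw [cycDeriv_torusS]
  refine ⟨add_mem hf₁₂ hf₆x, ?_⟩
  rw [pathRep_add _ hf₁₂ hf₆x, pathRep_add _ hf₁ hf₂, pathRep_smul, hp₁, hp₂, hp₆,
    Matrix.smul_single, ← Matrix.single_add, ← Matrix.single_add, hr, Matrix.single_zero]

theorem wf_torusLoop : torusQ.WF torusLoop :=
  Quiv.wf_cons_iff.mpr ⟨rfl, Quiv.wf_cons_iff.mpr ⟨rfl,
    Quiv.wf_cons_iff.mpr ⟨rfl, Quiv.wf_nil _ _⟩⟩⟩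

theorem pathRep_torusLoop_pow (x : K) (n : ℕ) :
    pathRep (torusWeight x) (unitS (torusQ.cyclePow torusLoop n) : Series K torusQ)
      = Matrix.single 0 0 (T n) := by
  have hw : pathWeight (torusWeight x) torusLoop.2 = T 1 :=
    (pathWeight_torusWeight x [0, 3, 5]).trans (by simp [torusWeight])
  rw [pathRep_unitS, pathMatrix, pathWeight_cyclePow, hw, T_pow, mul_one,
    (torusQ.wf_cyclePow wf_torusLoop (by decide) n).2]
  rfl

end Torus

end QPF

open QPF in
/-- Let `R⟨Q⟩` be the ordinary (non-complete) path algebra of the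
quiver of the canonical triangulation of the once-punctured torus, and `I` the
two-sided ideal of `R⟨Q⟩` generated by the cyclic derivatives `∂ₐ(S)`, where
`S = a1b1c1 + a2b2c2 + x·a1b2c1a2b1c2` with `x ≠ 0`.  Then the quotient `R⟨Q⟩/I` is
infinite-dimensional over `K`: no finite subset of `R⟨Q⟩` spans `R⟨Q⟩` modulo `I`. -/
theorem torus_ordinary_quotient_infinite_dimensional
    {K : Type} [Field K] (x : K) (hx : x ≠ 0) :
    ¬ ∃ fs : Finset (Series K torusQ), (↑fs : Set (Series K torusQ)) ⊆ ordPathAlg K torusQ ∧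
      ∀ u ∈ ordPathAlg K torusQ, ∃ c : Series K torusQ → K,
        u - (∑ v ∈ fs, c v • v)
          ∈ ordTwoSidedSpan K torusQ (Set.range (cycDeriv (torusS K x))) := by
  refine not_exists_finset_spanning_mod_of_pathRep (torusWeight x) ?_
    (fun n => unitS (torusQ.cyclePow torusLoop n)) (fun n => ?_) ?_
  · rintro _ ⟨e, rfl⟩
    exact pathRep_cycDeriv_torusS hx e
  · exact ⟨unitS_mem (torusQ.wf_cyclePow wf_torusLoop (by decide) n).1, unitS_mem_finSupp _⟩
  · simpa only [pathRep_torusLoop_pow] using linearIndependent_single_T 0 0
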